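/- arXiv:2405.01246 — 3 statements merged into one kernel-verified Lean document; each statement's English description precedes it below -/
import Mathlib

section
/- Let μ be a positive Borel measure on ℝ with 𝒩_0(μ) < ∞ and let ρ ∈ C_c^∞(−1,1) be non-negative, even, with ∫ρ = 1; set ρ^ε(x) = ε^{-1}ρ(x/ε) and dμ^ε/dx (x) = ∫ ρ^ε(x−y) dμ(y). Then for all 0 < ε ≤ 1 and k ∈ ℤ, ‖χ_k dμ^ε/dx‖_{L¹} ≲ 𝒩_k(μ), with implicit constant independent of ε and k. -/
open MeasureTheory Real
open scoped ENNReal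

noncomputable section

/-- The unit interval `I_ℓ = [ℓ - 1/2, ℓ + 1/2)`. -/
def unitIv (ℓ : ℤ) : Set ℝ := Set.Ico ((ℓ : ℝ) - 1 / 2) ((ℓ : ℝ) + 1 / 2)

/-- `𝒩_k(μ)² = 4 + sup_{ℓ ∈ ℤ} [μ(I_ℓ)² − |k − ℓ|]` (in `ℝ≥0∞`; since the `ℓ = k`
term is nonnegative, truncated subtraction does not change the supremum). -/
def Nsq (μ : Measure ℝ) (k : ℤ) : ℝ≥0∞ :=
  4 + ⨆ ℓ : ℤ, (μ (unitIv ℓ) ^ 2 - ((k - ℓ).natAbs : ℝ≥0∞))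

/-- The density `dμ^ε/dx (x) = ∫ ρ^ε(x−y) dμ(y)` with `ρ^ε(x) = ε⁻¹ρ(x/ε)`. -/
def mollDens (μ : Measure ℝ) (ρ : ℝ → ℝ) (ε : ℝ) (x : ℝ) : ℝ :=
  ∫ y, ε⁻¹ * ρ ((x - y) / ε) ∂μ

/-- Each unit interval appears as a member of `unitIv`. -/
lemma mem_unitIv_floor (x : ℝ) : x ∈ unitIv ⌊x + 1 / 2⌋ := by
  have h1 : (⌊x + 1 / 2⌋ : ℝ) ≤ x + 1 / 2 := Int.floor_le _
  have h2 : x + 1 / 2 < ⌊x + 1 / 2⌋ + 1 := Int.lt_floor_add_one _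
  simp only [unitIv, Set.mem_Ico]
  constructor <;> linarith

lemma sq_measure_le_Nsq (μ : Measure ℝ) (k ℓ : ℤ) (h : (k - ℓ).natAbs ≤ 4) :
    μ (unitIv ℓ) ^ 2 ≤ Nsq μ k := by
  have h1 : μ (unitIv ℓ) ^ 2 - ((k - ℓ).natAbs : ℝ≥0∞) ≤
      ⨆ m : ℤ, (μ (unitIv m) ^ 2 - ((k - m).natAbs : ℝ≥0∞)) :=
    le_iSup (fun m : ℤ => μ (unitIv m) ^ 2 - ((k - m).natAbs : ℝ≥0∞)) ℓ
  have h2 : μ (unitIv ℓ) ^ 2 ≤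
      (μ (unitIv ℓ) ^ 2 - ((k - ℓ).natAbs : ℝ≥0∞)) + ((k - ℓ).natAbs : ℝ≥0∞) :=
    le_tsub_add
  have h3 : ((k - ℓ).natAbs : ℝ≥0∞) ≤ 4 := by
    exact_mod_cast Nat.cast_le.mpr h
  calc μ (unitIv ℓ) ^ 2 ≤ _ + _ := h2
    _ ≤ (⨆ m : ℤ, (μ (unitIv m) ^ 2 - ((k - m).natAbs : ℝ≥0∞))) + 4 := add_le_add h1 h3
    _ = Nsq μ k := by rw [Nsq, add_comm]

lemma measure_le_Nsq_rpow (μ : Measure ℝ) (k ℓ : ℤ) (h : (k - ℓ).natAbs ≤ 4) :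
    μ (unitIv ℓ) ≤ Nsq μ k ^ (2⁻¹ : ℝ) := by
  have := ENNReal.rpow_le_rpow (sq_measure_le_Nsq μ k ℓ h)
    (by norm_num : (0:ℝ) ≤ 2⁻¹)
  calc μ (unitIv ℓ) = (μ (unitIv ℓ) ^ 2) ^ (2⁻¹ : ℝ) := by
        rw [← ENNReal.rpow_natCast _ 2, ← ENNReal.rpow_mul]
        norm_num
    _ ≤ Nsq μ k ^ (2⁻¹ : ℝ) := this

/-- `‖χ_k dμ^ε/dx‖_{L¹} ≲ 𝒩_k(μ)`, uniformly in `0 < ε ≤ 1` and `k ∈ ℤ`. -/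
theorem mollified_L1_bound (μ : Measure ℝ) (h0 : Nsq μ 0 ≠ ⊤)
    (ρ : ℝ → ℝ) (hρ : ContDiff ℝ (⊤ : ℕ∞) ρ) (hρsupp : Function.support ρ ⊆ Set.Ioo (-1) 1)
    (hρpos : ∀ x, 0 ≤ ρ x) (hρeven : ∀ x, ρ (-x) = ρ x) (hρint : ∫ x, ρ x = 1)
    (χ : ℝ → ℝ) (hχ : ContDiff ℝ (⊤ : ℕ∞) χ) (hsupp : Function.support χ ⊆ Set.Ioo (-1) 1)
    (hpos : ∀ x, 0 ≤ χ x) (hsum : ∀ x : ℝ, ∑' k : ℤ, χ (x - k) = 1) :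
    ∃ C > 0, ∀ ε : ℝ, 0 < ε → ε ≤ 1 → ∀ k : ℤ,
      (∫⁻ x, ENNReal.ofReal (χ (x - k) * mollDens μ ρ ε x)) ≤
        ENNReal.ofReal C * Nsq μ k ^ (2⁻¹ : ℝ) := by
  -- μ is sigma-finite since each unit interval has finite measure
  have hfin : ∀ ℓ : ℤ, μ (unitIv ℓ) < ⊤ := by
    intro ℓ
    have h2 : μ (unitIv ℓ) ^ 2 ≤ ((0 - ℓ).natAbs : ℝ≥0∞) + Nsq μ 0 := by
      calc μ (unitIv ℓ) ^ 2
          ≤ (μ (unitIv ℓ) ^ 2 - ((0 - ℓ).natAbs : ℝ≥0∞)) + ((0 - ℓ).natAbs : ℝ≥0∞) :=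
            le_tsub_add
        _ ≤ (⨆ m : ℤ, (μ (unitIv m) ^ 2 - ((0 - m).natAbs : ℝ≥0∞))) + ((0 - ℓ).natAbs : ℝ≥0∞) :=
            add_le_add (le_iSup (fun m : ℤ => μ (unitIv m) ^ 2 - ((0 - m).natAbs : ℝ≥0∞)) ℓ)
              le_rfl
        _ ≤ Nsq μ 0 + ((0 - ℓ).natAbs : ℝ≥0∞) := by
            refine add_le_add ?_ le_rfl
            exact le_add_self
        _ = _ := add_comm _ _
    have hne : μ (unitIv ℓ) ^ 2 ≠ ⊤ :=
      ne_top_of_le_ne_top (by simp [ENNReal.add_ne_top, h0, ENNReal.natCast_ne_top]) h2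
    refine lt_top_iff_ne_top.mpr fun h => hne ?_
    rw [h]
    simp
  have : SigmaFinite μ := by
    refine Measure.sigmaFinite_of_countable (Set.countable_range unitIv) ?_ ?_
    · rintro s ⟨ℓ, rfl⟩; exact hfin ℓ
    · rw [Set.sUnion_range]
      ext x
      simp only [Set.mem_iUnion, Set.mem_univ, iff_true]
      exact ⟨_, mem_unitIv_floor x⟩
  -- χ ≤ 1
  have hsummable : ∀ x : ℝ, Summable fun k : ℤ => χ (x - k) := by
    intro x
    by_contra h
    have := tsum_eq_zero_of_not_summable h
    rw [hsum x] at this; norm_num at this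
  have hχle : ∀ t : ℝ, χ t ≤ 1 := by
    intro t
    have := Summable.le_tsum (hsummable (t + 0)) (0 : ℤ) (fun j _ => hpos _)
    simpa [hsum t] using this
  refine ⟨5, by norm_num, fun ε hε hε1 k => ?_⟩
  -- ρ facts
  have hρcont : Continuous ρ := hρ.continuous
  have hρzero : ∀ t : ℝ, 1 ≤ |t| → ρ t = 0 := by
    intro t ht
    by_contra h
    have := hρsupp (Function.mem_support.mpr h)
    rcases this with ⟨h1, h2⟩
    rcases abs_cases t with ⟨he, _⟩ | ⟨he, _⟩ <;> linarith
  -- the shifted/scaled mollifier is continuous with compact support, hence integrable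
  have hint : ∀ y : ℝ, Integrable (fun x => ε⁻¹ * ρ ((x - y) / ε)) := by
    intro y
    have hc : Continuous fun x : ℝ => ρ ((x - y) / ε) :=
      hρcont.comp (by fun_prop)
    have hcs : HasCompactSupport fun x : ℝ => ρ ((x - y) / ε) := by
      apply HasCompactSupport.intro (isCompact_Icc (a := y - ε) (b := y + ε))
      intro x hx
      apply hρzero
      rw [abs_div, abs_of_pos hε, le_div_iff₀ hε, one_mul]
      simp only [Set.mem_Icc, not_and_or, not_le] at hx
      rcases hx with hx | hx
      · rw [abs_of_nonpos (by linarith)]; linarith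
      · rw [abs_of_nonneg (by linarith)]; linarith
    exact (hc.integrable_of_hasCompactSupport hcs).const_mul _
  -- total mass of the mollifier is 1
  have htotal : ∀ y : ℝ, ∫⁻ x, ENNReal.ofReal (ε⁻¹ * ρ ((x - y) / ε)) = 1 := by
    intro y
    rw [← ofReal_integral_eq_lintegral_ofReal (hint y)
      (Filter.Eventually.of_forall fun x => mul_nonneg (inv_nonneg.mpr hε.le) (hρpos _))]
    have h1 : ∫ x : ℝ, ρ ((x - y) / ε) = ∫ x : ℝ, ρ (x / ε) :=
      integral_sub_right_eq_self (fun x : ℝ => ρ (x / ε)) y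
    have h2 : ∫ x : ℝ, ρ (x / ε) = |ε| • ∫ x, ρ x := Measure.integral_comp_div ρ ε
    rw [integral_const_mul, h1, h2, hρint, abs_of_pos hε]
    simp [inv_mul_cancel₀ hε.ne']
  -- pointwise bound by indicator of (k-1, k+1)
  have step1 : (∫⁻ x, ENNReal.ofReal (χ (x - k) * mollDens μ ρ ε x)) ≤
      ∫⁻ x in Set.Ioo ((k : ℝ) - 1) ((k : ℝ) + 1),
        ENNReal.ofReal (mollDens μ ρ ε x) := by
    rw [← lintegral_indicator measurableSet_Ioo]
    apply lintegral_mono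
    intro x
    by_cases hx : x ∈ Set.Ioo ((k : ℝ) - 1) ((k : ℝ) + 1)
    · rw [Set.indicator_of_mem hx]
      apply ENNReal.ofReal_le_ofReal
      have hm : 0 ≤ mollDens μ ρ ε x :=
        integral_nonneg fun y => mul_nonneg (inv_nonneg.mpr hε.le) (hρpos _)
      calc χ (x - k) * mollDens μ ρ ε x ≤ 1 * mollDens μ ρ ε x :=
            mul_le_mul_of_nonneg_right (hχle _) hm
        _ = mollDens μ ρ ε x := one_mul _
    · rw [Set.indicator_of_notMem hx]
      have : χ (x - k) = 0 := by
        by_contra h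
        have := hsupp (Function.mem_support.mpr h)
        rcases this with ⟨h1, h2⟩
        rcases hx ⟨by linarith, by linarith⟩
      simp [this]
  -- pass to the lintegral of the mollifier
  have step2 : ∀ x : ℝ, ENNReal.ofReal (mollDens μ ρ ε x) ≤
      ∫⁻ y, ENNReal.ofReal (ε⁻¹ * ρ ((x - y) / ε)) ∂μ := by
    intro x
    by_cases hi : Integrable (fun y => ε⁻¹ * ρ ((x - y) / ε)) μ
    · rw [mollDens, ofReal_integral_eq_lintegral_ofReal hi
        (Filter.Eventually.of_forall fun y => mul_nonneg (inv_nonneg.mpr hε.le) (hρpos _))]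
    · rw [mollDens, integral_undef hi]; simp
  -- Tonelli
  have hmeas : AEMeasurable (Function.uncurry fun x y : ℝ =>
      ENNReal.ofReal (ε⁻¹ * ρ ((x - y) / ε)))
      ((volume.restrict (Set.Ioo ((k : ℝ) - 1) ((k : ℝ) + 1))).prod μ) := by
    apply Measurable.aemeasurable
    apply ENNReal.measurable_ofReal.comp
    exact (measurable_const.mul (hρcont.measurable.comp (by fun_prop)))
  have step3 : (∫⁻ x in Set.Ioo ((k : ℝ) - 1) ((k : ℝ) + 1),
        ∫⁻ y, ENNReal.ofReal (ε⁻¹ * ρ ((x - y) / ε)) ∂μ) =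
      ∫⁻ y, (∫⁻ x in Set.Ioo ((k : ℝ) - 1) ((k : ℝ) + 1),
        ENNReal.ofReal (ε⁻¹ * ρ ((x - y) / ε))) ∂μ :=
    lintegral_lintegral_swap hmeas
  -- inner bound
  have step4 : ∀ y : ℝ, (∫⁻ x in Set.Ioo ((k : ℝ) - 1) ((k : ℝ) + 1),
      ENNReal.ofReal (ε⁻¹ * ρ ((x - y) / ε))) ≤
      (Set.Ioo ((k : ℝ) - 2) ((k : ℝ) + 2)).indicator (fun _ => 1) y := by
    intro y
    by_cases hy : y ∈ Set.Ioo ((k : ℝ) - 2) ((k : ℝ) + 2)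
    · rw [Set.indicator_of_mem hy]
      calc _ ≤ ∫⁻ x, ENNReal.ofReal (ε⁻¹ * ρ ((x - y) / ε)) :=
            setLIntegral_le_lintegral _ _
        _ = 1 := htotal y
    · rw [Set.indicator_of_notMem hy]
      have hz : ∀ x ∈ Set.Ioo ((k : ℝ) - 1) ((k : ℝ) + 1),
          ENNReal.ofReal (ε⁻¹ * ρ ((x - y) / ε)) = 0 := by
        intro x hx
        have : ρ ((x - y) / ε) = 0 := by
          apply hρzero
          rw [abs_div, abs_of_pos hε, le_div_iff₀ hε]
          simp only [Set.mem_Ioo, not_and_or, not_lt] at hy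
          rcases hx with ⟨hx1, hx2⟩
          rcases hy with hy | hy
          · rw [abs_of_nonneg (by linarith)]; linarith
          · rw [abs_of_nonpos (by linarith)]; linarith
        simp [this]
      refine le_of_eq ?_
      calc _ = ∫⁻ x in Set.Ioo ((k : ℝ) - 1) ((k : ℝ) + 1), (0 : ℝ≥0∞) :=
            setLIntegral_congr_fun measurableSet_Ioo hz
        _ = 0 := lintegral_zero
  -- measure of (k-2, k+2) bounded by 5 √Nsq
  have step5 : μ (Set.Ioo ((k : ℝ) - 2) ((k : ℝ) + 2)) ≤ 5 * Nsq μ k ^ (2⁻¹ : ℝ) := by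
    have hsub : Set.Ioo ((k : ℝ) - 2) ((k : ℝ) + 2) ⊆
        ⋃ i ∈ Finset.Icc (-2 : ℤ) 2, unitIv (k + i) := by
      intro x hx
      have hmem := mem_unitIv_floor x
      set m : ℤ := ⌊x + 1 / 2⌋ with hm
      have h1 : (m : ℝ) ≤ x + 1 / 2 := Int.floor_le _
      have h2 : x + 1 / 2 < m + 1 := Int.lt_floor_add_one _
      rcases hx with ⟨hx1, hx2⟩
      have hub : m < k + 3 := by
        have : (m : ℝ) < ((k + 3 : ℤ) : ℝ) := by push_cast; linarith
        exact_mod_cast this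
      have hlb : k - 3 < m := by
        have : ((k - 3 : ℤ) : ℝ) < (m : ℝ) := by push_cast; linarith
        exact_mod_cast this
      have hi : m - k ∈ Finset.Icc (-2 : ℤ) 2 := by
        simp only [Finset.mem_Icc]; omega
      refine Set.mem_biUnion hi ?_
      have : k + (m - k) = m := by omega
      rw [this]
      exact hmem
    calc μ (Set.Ioo ((k : ℝ) - 2) ((k : ℝ) + 2)) ≤
        μ (⋃ i ∈ Finset.Icc (-2 : ℤ) 2, unitIv (k + i)) := measure_mono hsub
      _ ≤ ∑ i ∈ Finset.Icc (-2 : ℤ) 2, μ (unitIv (k + i)) := measure_biUnion_finset_le _ _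
      _ ≤ ∑ _i ∈ Finset.Icc (-2 : ℤ) 2, Nsq μ k ^ (2⁻¹ : ℝ) := by
          apply Finset.sum_le_sum
          intro i hi
          apply measure_le_Nsq_rpow
          simp only [Finset.mem_Icc] at hi
          omega
      _ = 5 * Nsq μ k ^ (2⁻¹ : ℝ) := by
          rw [Finset.sum_const]
          norm_num
          rfl
  -- assemble
  calc (∫⁻ x, ENNReal.ofReal (χ (x - k) * mollDens μ ρ ε x))
      ≤ ∫⁻ x in Set.Ioo ((k : ℝ) - 1) ((k : ℝ) + 1),
        ENNReal.ofReal (mollDens μ ρ ε x) := step1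
    _ ≤ ∫⁻ x in Set.Ioo ((k : ℝ) - 1) ((k : ℝ) + 1),
        ∫⁻ y, ENNReal.ofReal (ε⁻¹ * ρ ((x - y) / ε)) ∂μ :=
        lintegral_mono fun x => step2 x
    _ = ∫⁻ y, (∫⁻ x in Set.Ioo ((k : ℝ) - 1) ((k : ℝ) + 1),
        ENNReal.ofReal (ε⁻¹ * ρ ((x - y) / ε))) ∂μ := step3
    _ ≤ ∫⁻ y, (Set.Ioo ((k : ℝ) - 2) ((k : ℝ) + 2)).indicator (fun _ => 1) y ∂μ :=
        lintegral_mono fun y => step4 y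
    _ = μ (Set.Ioo ((k : ℝ) - 2) ((k : ℝ) + 2)) := by
        rw [lintegral_indicator measurableSet_Ioo]; simp
    _ ≤ 5 * Nsq μ k ^ (2⁻¹ : ℝ) := step5
    _ = ENNReal.ofReal 5 * Nsq μ k ^ (2⁻¹ : ℝ) := by
        norm_num [ENNReal.ofReal_ofNat]
end
end

section
/- Let μ be a homogeneous Poisson process of unit intensity on ℝ, so that the random variables μ(I_ℓ), ℓ ∈ ℤ, with I_ℓ = [ℓ−1/2, ℓ+1/2), are i.i.d. Poisson random variables with mean 1. Then 𝔼[𝒩_0(μ)²] < ∞, where 𝒩_0(μ)² = 4 + sup_{ℓ∈ℤ}[μ(I_ℓ)² − |ℓ|]; in particular 𝒩_0(μ) < ∞ almost surely. -/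
open MeasureTheory Real
open scoped ENNReal

noncomputable section

open ProbabilityTheory


private lemma sq_le_two_pow : ∀ n : ℕ, 4 ≤ n → n ^ 2 ≤ 2 ^ n := by
  intro n hn
  induction n with
  | zero => omega
  | succ k ih =>
    rcases Nat.lt_or_ge k 4 with h | h
    · interval_cases k <;> simp_all
    · have hk := ih h
      have h2 : 2 * k + 1 ≤ k ^ 2 := by nlinarith
      calc (k + 1) ^ 2 = k ^ 2 + (2 * k + 1) := by ring
        _ ≤ k ^ 2 + k ^ 2 := by omega
        _ ≤ 2 ^ k + 2 ^ k := by omega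
        _ = 2 ^ (k + 1) := by ring

private lemma pow4_le : ∀ n : ℕ, n ^ 4 ≤ 2 * 4 ^ n := by
  intro n
  rcases Nat.lt_or_ge n 4 with h | h
  · interval_cases n <;> decide
  · have h2 := sq_le_two_pow n h
    calc n ^ 4 = (n ^ 2) ^ 2 := by ring
      _ ≤ (2 ^ n) ^ 2 := Nat.pow_le_pow_left h2 2
      _ = 4 ^ n := by rw [← pow_mul, mul_comm, pow_mul]; norm_num
      _ ≤ 2 * 4 ^ n := by omega

private lemma lintegral_comp_natval {Ω : Type*} [MeasurableSpace Ω] (P : Measure Ω)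
    (X : Ω → ℝ≥0∞) (hX : Measurable X) (hnat : ∀ ω, ∃ n : ℕ, X ω = n)
    (g : ℝ≥0∞ → ℝ≥0∞) :
    ∫⁻ ω, g (X ω) ∂P = ∑' n : ℕ, g n * P {ω | X ω = n} := by
  have hA : ∀ n : ℕ, MeasurableSet {ω | X ω = (n : ℝ≥0∞)} := fun n =>
    hX (measurableSet_singleton _)
  have hdisj : Pairwise (Function.onFun Disjoint fun n : ℕ => {ω | X ω = (n : ℝ≥0∞)}) := by
    intro m n hmn
    simp only [Function.onFun, Set.disjoint_left, Set.mem_setOf_eq]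
    intro ω h1 h2
    exact hmn (Nat.cast_injective (h1.symm.trans h2))
  have hcover : (⋃ n : ℕ, {ω | X ω = (n : ℝ≥0∞)}) = Set.univ := by
    ext ω
    simp only [Set.mem_iUnion, Set.mem_univ, iff_true, Set.mem_setOf_eq]
    exact hnat ω
  calc ∫⁻ ω, g (X ω) ∂P = ∫⁻ ω in ⋃ n : ℕ, {ω | X ω = (n : ℝ≥0∞)}, g (X ω) ∂P := by
        rw [hcover, Measure.restrict_univ]
    _ = ∑' n : ℕ, ∫⁻ ω in {ω | X ω = (n : ℝ≥0∞)}, g (X ω) ∂P := lintegral_iUnion hA hdisj _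
    _ = ∑' n : ℕ, g n * P {ω | X ω = n} := by
        refine tsum_congr fun n => ?_
        have : ∫⁻ x in {ω | X ω = (n : ℝ≥0∞)}, g (X x) ∂P
            = ∫⁻ _ in {ω | X ω = (n : ℝ≥0∞)}, g n ∂P :=
          setLIntegral_congr_fun (hA n)
            (fun ω hω => by rw [Set.mem_setOf_eq] at hω; simp only [hω])
        rw [this, setLIntegral_const]

private lemma count_bound (n : ℕ) :
    ∑' ℓ : ℤ, ((n : ℝ≥0∞) ^ 2 - (((0 : ℤ) - ℓ).natAbs : ℝ≥0∞)) ≤ 2 * (n : ℝ≥0∞) ^ 4 := by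
  set m : ℕ := n ^ 2 with hm
  have hzero : ∀ ℓ : ℤ, ℓ ∉ Finset.Ioo (-(m : ℤ)) (m : ℤ) →
      ((n : ℝ≥0∞) ^ 2 - (((0 : ℤ) - ℓ).natAbs : ℝ≥0∞)) = 0 := by
    intro ℓ hℓ
    apply tsub_eq_zero_of_le
    have habs : m ≤ ((0 : ℤ) - ℓ).natAbs := by
      simp only [Finset.mem_Ioo, not_and_or, not_lt] at hℓ
      omega
    calc (n : ℝ≥0∞) ^ 2 = ((m : ℕ) : ℝ≥0∞) := by rw [hm]; push_cast; ring
      _ ≤ _ := by exact_mod_cast habs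
  rw [tsum_eq_sum hzero]
  have hcard : ((Finset.Ioo (-(m : ℤ)) (m : ℤ)).card : ℝ≥0∞) ≤ ((2 * m : ℕ) : ℝ≥0∞) := by
    have : (Finset.Ioo (-(m : ℤ)) (m : ℤ)).card ≤ 2 * m := by
      rw [Int.card_Ioo]; omega
    exact_mod_cast this
  calc ∑ ℓ ∈ Finset.Ioo (-(m : ℤ)) (m : ℤ), ((n : ℝ≥0∞) ^ 2 - (((0 : ℤ) - ℓ).natAbs : ℝ≥0∞))
      ≤ ∑ _ℓ ∈ Finset.Ioo (-(m : ℤ)) (m : ℤ), (n : ℝ≥0∞) ^ 2 :=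
        Finset.sum_le_sum fun ℓ _ => tsub_le_self
    _ = ((Finset.Ioo (-(m : ℤ)) (m : ℤ)).card : ℝ≥0∞) * (n : ℝ≥0∞) ^ 2 := by
        rw [Finset.sum_const, nsmul_eq_mul]
    _ ≤ ((2 * m : ℕ) : ℝ≥0∞) * (n : ℝ≥0∞) ^ 2 := by
        exact mul_le_mul_left hcard _
    _ = 2 * (n : ℝ≥0∞) ^ 4 := by rw [hm]; push_cast; ring

private lemma sum_finite :
    ∑' n : ℕ, 2 * (n : ℝ≥0∞) ^ 4 * ENNReal.ofReal (Real.exp (-1) / n.factorial) < ⊤ := by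
  have hu : ∀ n : ℕ, 2 * (n : ℝ≥0∞) ^ 4 * ENNReal.ofReal (Real.exp (-1) / n.factorial)
      = ENNReal.ofReal (2 * (n : ℝ) ^ 4 * (Real.exp (-1) / n.factorial)) := by
    intro n
    rw [ENNReal.ofReal_mul (by positivity)]
    congr 1
    rw [show (2 * (n : ℝ) ^ 4) = ((2 * n ^ 4 : ℕ) : ℝ) by push_cast; ring,
      ENNReal.ofReal_natCast]
    push_cast; ring
  have hnonneg : ∀ n : ℕ, 0 ≤ 2 * (n : ℝ) ^ 4 * (Real.exp (-1) / n.factorial) := by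
    intro n; positivity
  have hsummable : Summable fun n : ℕ => 2 * (n : ℝ) ^ 4 * (Real.exp (-1) / n.factorial) := by
    apply Summable.of_nonneg_of_le hnonneg
      (f := fun n : ℕ => (4 * Real.exp (-1)) * ((4 : ℝ) ^ n / n.factorial))
    · intro n
      have h4 : (n : ℝ) ^ 4 ≤ 2 * 4 ^ n := by exact_mod_cast pow4_le n
      have hfac : (0 : ℝ) < n.factorial := by positivity
      have he : (0 : ℝ) < Real.exp (-1) := Real.exp_pos _
      calc 2 * (n : ℝ) ^ 4 * (Real.exp (-1) / n.factorial)
          ≤ 2 * (2 * 4 ^ n) * (Real.exp (-1) / n.factorial) := by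
            apply mul_le_mul_of_nonneg_right _ (by positivity)
            linarith
        _ = (4 * Real.exp (-1)) * ((4 : ℝ) ^ n / n.factorial) := by ring
    · exact (Real.summable_pow_div_factorial 4).mul_left _
  calc ∑' n : ℕ, 2 * (n : ℝ≥0∞) ^ 4 * ENNReal.ofReal (Real.exp (-1) / n.factorial)
      = ∑' n : ℕ, ENNReal.ofReal (2 * (n : ℝ) ^ 4 * (Real.exp (-1) / n.factorial)) := by
        exact tsum_congr hu
    _ = ENNReal.ofReal (∑' n : ℕ, 2 * (n : ℝ) ^ 4 * (Real.exp (-1) / n.factorial)) :=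
        (ENNReal.ofReal_tsum_of_nonneg hnonneg hsummable).symm
    _ < ⊤ := ENNReal.ofReal_lt_top

/-- For the homogeneous Poisson process of unit intensity (the `μ(I_ℓ)` being
i.i.d. Poisson random variables of mean `1`), `𝔼[𝒩_0(μ)²] < ∞`; in particular
`𝒩_0(μ) < ∞` almost surely. -/
theorem poisson_Nsq_expectation {Ω : Type*} [MeasurableSpace Ω]
    (P : Measure Ω) [IsProbabilityMeasure P] (μ : Ω → Measure ℝ)
    (hmeas : ∀ ℓ : ℤ, Measurable fun ω => μ ω (unitIv ℓ))
    (hnat : ∀ ω ℓ, ∃ n : ℕ, μ ω (unitIv ℓ) = n)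
    (hdist : ∀ (ℓ : ℤ) (n : ℕ),
      P {ω | μ ω (unitIv ℓ) = n} = ENNReal.ofReal (Real.exp (-1) / n.factorial))
    (hindep : iIndepFun
      (fun ℓ ω => μ ω (unitIv ℓ)) P) :
    (∫⁻ ω, Nsq (μ ω) 0 ∂P) < ⊤ ∧ ∀ᵐ ω ∂P, Nsq (μ ω) 0 ≠ ⊤ := by
  have hmeast : ∀ ℓ : ℤ,
      Measurable fun ω => μ ω (unitIv ℓ) ^ 2 - ((((0 : ℤ) - ℓ).natAbs : ℕ) : ℝ≥0∞) :=
    fun ℓ => ((hmeas ℓ).pow_const 2).sub measurable_const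
  have hmeasf : Measurable fun ω => Nsq (μ ω) 0 := by
    unfold Nsq
    exact measurable_const.add (Measurable.iSup fun ℓ => hmeast ℓ)
  have hint : ∀ ℓ : ℤ, ∫⁻ ω, (μ ω (unitIv ℓ) ^ 2 - ((((0 : ℤ) - ℓ).natAbs : ℕ) : ℝ≥0∞)) ∂P
      = ∑' n : ℕ, ((n : ℝ≥0∞) ^ 2 - ((((0 : ℤ) - ℓ).natAbs : ℕ) : ℝ≥0∞))
          * ENNReal.ofReal (Real.exp (-1) / n.factorial) := by
    intro ℓ
    rw [lintegral_comp_natval P (fun ω => μ ω (unitIv ℓ)) (hmeas ℓ) (fun ω => hnat ω ℓ)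
      (fun x => x ^ 2 - ((((0 : ℤ) - ℓ).natAbs : ℕ) : ℝ≥0∞))]
    exact tsum_congr fun n => by rw [hdist ℓ n]
  have hfin : (∫⁻ ω, Nsq (μ ω) 0 ∂P) < ⊤ := by
    calc ∫⁻ ω, Nsq (μ ω) 0 ∂P
        ≤ ∫⁻ ω, (4 + ∑' ℓ : ℤ,
            (μ ω (unitIv ℓ) ^ 2 - ((((0 : ℤ) - ℓ).natAbs : ℕ) : ℝ≥0∞))) ∂P := by
          apply lintegral_mono
          intro ω
          unfold Nsq
          exact add_le_add_right (iSup_le fun ℓ => ENNReal.le_tsum ℓ) 4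
      _ = 4 + ∑' ℓ : ℤ,
            ∫⁻ ω, (μ ω (unitIv ℓ) ^ 2 - ((((0 : ℤ) - ℓ).natAbs : ℕ) : ℝ≥0∞)) ∂P := by
          rw [lintegral_add_left measurable_const, lintegral_const, measure_univ, mul_one,
            lintegral_tsum (fun ℓ => (hmeast ℓ).aemeasurable)]
      _ = 4 + ∑' n : ℕ, (∑' ℓ : ℤ, ((n : ℝ≥0∞) ^ 2 - ((((0 : ℤ) - ℓ).natAbs : ℕ) : ℝ≥0∞)))
            * ENNReal.ofReal (Real.exp (-1) / n.factorial) := by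
          rw [tsum_congr hint, ENNReal.tsum_comm]
          exact congrArg (4 + ·) (tsum_congr fun n => ENNReal.tsum_mul_right)
      _ ≤ 4 + ∑' n : ℕ, 2 * (n : ℝ≥0∞) ^ 4 * ENNReal.ofReal (Real.exp (-1) / n.factorial) := by
          refine add_le_add_right (ENNReal.tsum_le_tsum fun n => ?_) 4
          exact mul_le_mul_left (count_bound n) _
      _ < ⊤ := ENNReal.add_lt_top.mpr ⟨by norm_num, sum_finite⟩
  exact ⟨hfin, (ae_lt_top hmeasf hfin.ne).mono fun ω h => h.ne⟩
end
end

section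
/- Let μ be a homogeneous Poisson process of unit intensity on ℝ and let 1 ≤ p < ∞. Then for every f ∈ L²(ℝ), 𝔼[‖f‖_{L²_μ}^{2p}] ≲_p ‖f‖_{L²}^{2p}; in particular f ∈ L²_μ almost surely. -/
open MeasureTheory Real
open scoped ENNReal FourierTransform

noncomputable section

/-- The interpolated weight `w(x;μ)`: for `x ∈ [k, k+1)`,
`w(x;μ) = (1+k−x)𝒩_k(μ)² + (x−k)𝒩_{k+1}(μ)²`. -/
def weightE (μ : Measure ℝ) (x : ℝ) : ℝ≥0∞ :=
  ENNReal.ofReal (1 + (⌊x⌋ : ℝ) - x) * Nsq μ ⌊x⌋ +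
    ENNReal.ofReal (x - (⌊x⌋ : ℝ)) * Nsq μ (⌊x⌋ + 1)

/-- Membership in the weighted space `L²_μ = L²(ℝ; w(x;μ)dx)`. -/
def MemL2mu (μ : Measure ℝ) (f : ℝ → ℂ) : Prop :=
  (∫⁻ x, (‖f x‖₊ : ℝ≥0∞) ^ 2 * weightE μ x) ≠ ⊤

/-- The `L²_μ` norm `(∫ |f|² w(x;μ) dx)^{1/2}`. -/
def L2muNorm (μ : Measure ℝ) (f : ℝ → ℂ) : ℝ :=
  Real.sqrt (∫⁻ x, (‖f x‖₊ : ℝ≥0∞) ^ 2 * weightE μ x).toReal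

/-- The `H^s(ℝ)` norm: `‖f‖_{H^s}² = ∫ (1+ξ²)^s |f̂(ξ)|² dξ`. -/
def HsNorm (s : ℝ) (f : ℝ → ℂ) : ℝ :=
  Real.sqrt (∫ ξ : ℝ, (1 + ξ ^ 2) ^ s * ‖𝓕 f ξ‖ ^ 2)

/-- Membership in the Sobolev space `H^s(ℝ)`. -/
def MemHs (s : ℝ) (f : ℝ → ℂ) : Prop :=
  MemLp f 2 (volume : Measure ℝ) ∧
    Integrable (fun ξ : ℝ => (1 + ξ ^ 2) ^ s * ‖𝓕 f ξ‖ ^ 2) volume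

section AuxPoisson

lemma ennreal_iSup_rpow {ι : Sort*} (g : ι → ℝ≥0∞) {p : ℝ} (hp : 0 < p) :
    (⨆ i, g i) ^ p = ⨆ i, g i ^ p := by
  have := (ENNReal.orderIsoRpow p hp).map_iSup g
  simpa only [ENNReal.orderIsoRpow_apply] using this

lemma ennreal_add_rpow_le (a b : ℝ≥0∞) {p : ℝ} (hp : 0 ≤ p) :
    (a + b) ^ p ≤ 2 ^ p * (a ^ p + b ^ p) := by
  have h1 : a + b ≤ 2 * max a b := by
    rw [two_mul]; exact add_le_add (le_max_left a b) (le_max_right a b)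
  calc (a + b) ^ p ≤ (2 * max a b) ^ p := ENNReal.rpow_le_rpow h1 hp
    _ = 2 ^ p * (max a b) ^ p := ENNReal.mul_rpow_of_nonneg _ _ hp
    _ ≤ 2 ^ p * (a ^ p + b ^ p) := by
        gcongr
        rcases max_cases a b with ⟨h, _⟩ | ⟨h, _⟩ <;> rw [h]
        · exact self_le_add_right _ _
        · exact self_le_add_left _ _

lemma lintegral_tsum_rpow_le {Ω : Type*} [MeasurableSpace Ω] {ι : Type*} [Countable ι]
    (P : Measure Ω) (g : ι → Ω → ℝ≥0∞) (hg : ∀ k, Measurable (g k)) {p : ℝ} (hp : 1 ≤ p) :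
    (∫⁻ ω, (∑' k, g k ω) ^ p ∂P) ≤ (∑' k, (∫⁻ ω, g k ω ^ p ∂P) ^ (1 / p)) ^ p := by
  have hp0 : 0 < p := lt_of_lt_of_le zero_lt_one hp
  have hfin : ∀ s : Finset ι,
      (∫⁻ ω, (∑ k ∈ s, g k ω) ^ p ∂P) ^ (1 / p)
        ≤ ∑ k ∈ s, (∫⁻ ω, g k ω ^ p ∂P) ^ (1 / p) := by
    intro s
    classical
    induction s using Finset.induction_on with
    | empty =>
        simp [ENNReal.zero_rpow_of_pos hp0, ENNReal.zero_rpow_of_pos (one_div_pos.mpr hp0), hp0]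
    | @insert a s ha ih =>
        have hmeas_sum : Measurable fun ω => ∑ k ∈ s, g k ω :=
          Finset.measurable_sum s fun k _ => hg k
        calc (∫⁻ ω, (∑ k ∈ insert a s, g k ω) ^ p ∂P) ^ (1 / p)
            = (∫⁻ ω, ((g a + fun ω => ∑ k ∈ s, g k ω) ω) ^ p ∂P) ^ (1 / p) := by
              simp only [Finset.sum_insert ha]; rfl
          _ ≤ (∫⁻ ω, g a ω ^ p ∂P) ^ (1 / p)
              + (∫⁻ ω, (∑ k ∈ s, g k ω) ^ p ∂P) ^ (1 / p) :=
              ENNReal.lintegral_Lp_add_le (hg a).aemeasurable hmeas_sum.aemeasurable hp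
          _ ≤ _ := by
              rw [Finset.sum_insert ha]
              exact add_le_add le_rfl ih
  have hmono : Monotone (fun s : Finset ι => fun ω => (∑ k ∈ s, g k ω) ^ p) := by
    intro s t hst ω
    exact ENNReal.rpow_le_rpow (Finset.sum_le_sum_of_subset hst) hp0.le
  calc ∫⁻ ω, (∑' k, g k ω) ^ p ∂P
      = ∫⁻ ω, ⨆ s : Finset ι, (∑ k ∈ s, g k ω) ^ p ∂P := by
        refine lintegral_congr fun ω => ?_
        rw [ENNReal.tsum_eq_iSup_sum, ennreal_iSup_rpow _ hp0]
    _ = ⨆ s : Finset ι, ∫⁻ ω, (∑ k ∈ s, g k ω) ^ p ∂P := by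
        refine lintegral_iSup_directed (fun s => ?_) hmono.directed_le
        exact (ENNReal.continuous_rpow_const.measurable.comp
          (Finset.measurable_sum s fun k _ => hg k)).aemeasurable
    _ ≤ ⨆ s : Finset ι, (∑ k ∈ s, (∫⁻ ω, g k ω ^ p ∂P) ^ (1 / p)) ^ p := by
        refine iSup_mono fun s => ?_
        have h := ENNReal.rpow_le_rpow (hfin s) hp0.le
        rwa [← ENNReal.rpow_mul, one_div_mul_cancel hp0.ne', ENNReal.rpow_one] at h
    _ ≤ (∑' k, (∫⁻ ω, g k ω ^ p ∂P) ^ (1 / p)) ^ p :=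
        iSup_le fun s => ENNReal.rpow_le_rpow (ENNReal.sum_le_tsum s) hp0.le

lemma lintegral_comp_count {Ω : Type*} [MeasurableSpace Ω] (P : Measure Ω)
    [IsProbabilityMeasure P] (N : Ω → ℝ≥0∞) (hN : Measurable N)
    (hnat : ∀ ω, ∃ n : ℕ, N ω = n) (g : ℝ≥0∞ → ℝ≥0∞) :
    ∫⁻ ω, g (N ω) ∂P = ∑' n : ℕ, g n * P {ω | N ω = n} := by
  have hA : ∀ n : ℕ, MeasurableSet {ω | N ω = (n : ℝ≥0∞)} := fun n =>
    hN (measurableSet_singleton _)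
  have hcover : (Set.univ : Set Ω) = ⋃ n : ℕ, {ω | N ω = (n : ℝ≥0∞)} := by
    ext ω
    simp only [Set.mem_univ, Set.mem_iUnion, true_iff, Set.mem_setOf_eq]
    exact hnat ω
  have hdisj : Pairwise (Function.onFun Disjoint fun n : ℕ => {ω | N ω = (n : ℝ≥0∞)}) := by
    intro m n hmn
    refine Set.disjoint_left.mpr fun ω hm hn => hmn ?_
    have h : ((m : ℝ≥0∞)) = n := by
      rw [← hm]; exact hn
    exact_mod_cast h
  calc ∫⁻ ω, g (N ω) ∂P = ∫⁻ ω in Set.univ, g (N ω) ∂P := (setLIntegral_univ _).symm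
    _ = ∫⁻ ω in ⋃ n : ℕ, {ω | N ω = (n : ℝ≥0∞)}, g (N ω) ∂P := by rw [← hcover]
    _ = ∑' n : ℕ, ∫⁻ ω in {ω | N ω = (n : ℝ≥0∞)}, g (N ω) ∂P := lintegral_iUnion hA hdisj _
    _ = ∑' n : ℕ, g n * P {ω | N ω = (n : ℝ≥0∞)} := by
        refine tsum_congr fun n => ?_
        rw [setLIntegral_congr_fun (hA n) (fun ω hω => by
          rw [show N ω = (n : ℝ≥0∞) from hω]), setLIntegral_const]

lemma summable_nat_pow_div_factorial (Q : ℕ) :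
    Summable (fun n : ℕ => (n : ℝ) ^ Q / n.factorial) := by
  refine summable_of_ratio_norm_eventually_le (r := 1 / 2) (by norm_num) ?_
  filter_upwards [Filter.eventually_ge_atTop (2 ^ (Q + 1))] with n hn
  have hn1 : 1 ≤ n := le_trans Nat.one_le_two_pow hn
  have hfpos : (0 : ℝ) < n.factorial := by exact_mod_cast n.factorial_pos
  rw [Real.norm_of_nonneg (by positivity), Real.norm_of_nonneg (by positivity)]
  have hfact : ((n + 1).factorial : ℝ) = ((n : ℝ) + 1) * n.factorial := by
    rw [Nat.factorial_succ]; push_cast; ring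
  have hA : ((n : ℝ) + 1) ^ Q ≤ 2 ^ Q * (n : ℝ) ^ Q := by
    have h1 : (1 : ℝ) ≤ n := by exact_mod_cast hn1
    calc ((n : ℝ) + 1) ^ Q ≤ (2 * (n : ℝ)) ^ Q :=
          pow_le_pow_left₀ (by positivity) (by linarith) Q
      _ = 2 ^ Q * (n : ℝ) ^ Q := mul_pow _ _ _
  have hB : (2 : ℝ) ^ (Q + 1) ≤ (n : ℝ) + 1 := by
    have h : ((2 ^ (Q + 1) : ℕ) : ℝ) ≤ (n : ℝ) := by exact_mod_cast hn
    push_cast at h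
    linarith
  have key : ((n : ℝ) + 1) ^ Q * (2 * n.factorial) ≤ (n : ℝ) ^ Q * (((n : ℝ) + 1) * n.factorial) := by
    calc ((n : ℝ) + 1) ^ Q * (2 * n.factorial)
        ≤ (2 ^ Q * (n : ℝ) ^ Q) * (2 * n.factorial) :=
          mul_le_mul_of_nonneg_right hA (by positivity)
      _ = (n : ℝ) ^ Q * (2 ^ (Q + 1) * n.factorial) := by ring
      _ ≤ (n : ℝ) ^ Q * (((n : ℝ) + 1) * n.factorial) :=
          mul_le_mul_of_nonneg_left (mul_le_mul_of_nonneg_right hB hfpos.le) (by positivity)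
  have h2 : (1 : ℝ) / 2 * ((n : ℝ) ^ Q / n.factorial) = (n : ℝ) ^ Q / (2 * n.factorial) := by
    ring
  push_cast
  rw [h2, hfact, div_le_div_iff₀ (by positivity) (by positivity)]
  exact key

lemma tsum_pow_div_factorial_ne_top (Q : ℕ) :
    ∑' n : ℕ, (n : ℝ≥0∞) ^ Q * ENNReal.ofReal (1 / n.factorial) ≠ ⊤ := by
  have h1 : ∀ n : ℕ, (n : ℝ≥0∞) ^ Q * ENNReal.ofReal (1 / n.factorial)
      = ENNReal.ofReal ((n : ℝ) ^ Q / n.factorial) := by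
    intro n
    rw [div_eq_mul_one_div ((n : ℝ) ^ Q), ENNReal.ofReal_mul (by positivity),
      ENNReal.ofReal_pow (by positivity), ENNReal.ofReal_natCast]
  simp only [h1]
  rw [← ENNReal.ofReal_tsum_of_nonneg (fun n => by positivity)
    (summable_nat_pow_div_factorial Q)]
  exact ENNReal.ofReal_ne_top

lemma lintegral_eq_tsum_Ico (h : ℝ → ℝ≥0∞) :
    ∫⁻ x, h x = ∑' k : ℤ, ∫⁻ x in Set.Ico (k : ℝ) ((k : ℝ) + 1), h x := by
  have hcover : (Set.univ : Set ℝ) = ⋃ k : ℤ, Set.Ico (k : ℝ) ((k : ℝ) + 1) := by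
    ext x
    simp only [Set.mem_univ, true_iff, Set.mem_iUnion, Set.mem_Ico]
    exact ⟨⌊x⌋, Int.floor_le x, Int.lt_floor_add_one x⟩
  have hdisj : Pairwise (Function.onFun Disjoint fun k : ℤ => Set.Ico (k : ℝ) ((k : ℝ) + 1)) := by
    intro k j hkj
    refine Set.disjoint_left.mpr fun x hk hj => hkj ?_
    have h1 : ⌊x⌋ = k := by
      rw [Int.floor_eq_iff]; exact ⟨hk.1, by exact_mod_cast hk.2⟩
    have h2 : ⌊x⌋ = j := by
      rw [Int.floor_eq_iff]; exact ⟨hj.1, by exact_mod_cast hj.2⟩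
    omega
  rw [← setLIntegral_univ, hcover, lintegral_iUnion (fun _ => measurableSet_Ico) hdisj]

lemma moment_bound {Ω : Type*} [MeasurableSpace Ω]
    (P : Measure Ω) [IsProbabilityMeasure P] (μ : Ω → Measure ℝ)
    (hmeas : ∀ ℓ : ℤ, Measurable fun ω => μ ω (unitIv ℓ))
    (hnat : ∀ ω ℓ, ∃ n : ℕ, μ ω (unitIv ℓ) = n)
    (hdist : ∀ (ℓ : ℤ) (n : ℕ),
      P {ω | μ ω (unitIv ℓ) = n} = ENNReal.ofReal (Real.exp (-1) / n.factorial))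
    {p : ℝ} (hp : 1 ≤ p) :
    ∃ M : ℝ≥0∞, M ≠ ⊤ ∧ ∀ k : ℤ, ∫⁻ ω, Nsq (μ ω) k ^ p ∂P ≤ M := by
  have hp0 : 0 < p := lt_of_lt_of_le zero_lt_one hp
  set q : ℕ := ⌈p⌉₊ with hq
  have hpq : p ≤ (q : ℝ) := Nat.le_ceil p
  set b : ℕ → ℝ≥0∞ := fun m =>
    ∑' n : ℕ, ((n : ℝ≥0∞) ^ 2 - (m : ℝ≥0∞)) ^ p * ENNReal.ofReal (Real.exp (-1) / n.factorial)
    with hb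
  -- single-variable computation
  have hBint : ∀ (ℓ : ℤ) (m : ℕ),
      ∫⁻ ω, ((μ ω (unitIv ℓ)) ^ 2 - (m : ℝ≥0∞)) ^ p ∂P = b m := by
    intro ℓ m
    have := lintegral_comp_count P (fun ω => μ ω (unitIv ℓ)) (hmeas ℓ)
      (fun ω => hnat ω ℓ) (fun x => (x ^ 2 - (m : ℝ≥0∞)) ^ p)
    rw [this, hb]
    exact tsum_congr fun n => by rw [hdist ℓ n]
  -- bound b m termwise
  have hbb : ∀ m : ℕ, b m ≤ ∑' n : ℕ,
      (if m < n ^ 2 then (n : ℝ≥0∞) ^ (2 * q) else 0) * ENNReal.ofReal (1 / n.factorial) := by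
    intro m
    refine ENNReal.tsum_le_tsum fun n => ?_
    by_cases hmn : m < n ^ 2
    · rw [if_pos hmn]
      refine mul_le_mul' ?_ (ENNReal.ofReal_le_ofReal ?_)
      · have h1n : (1 : ℝ≥0∞) ≤ (n : ℝ≥0∞) ^ 2 := by
          have h : 1 ≤ n ^ 2 := Nat.one_le_iff_ne_zero.mpr (by omega)
          exact_mod_cast Nat.one_le_cast.mpr h
        calc ((n : ℝ≥0∞) ^ 2 - m) ^ p ≤ ((n : ℝ≥0∞) ^ 2) ^ p :=
              ENNReal.rpow_le_rpow tsub_le_self hp0.le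
          _ ≤ ((n : ℝ≥0∞) ^ 2) ^ (q : ℝ) := ENNReal.rpow_le_rpow_of_exponent_le h1n hpq
          _ = (n : ℝ≥0∞) ^ (2 * q) := by
              rw [ENNReal.rpow_natCast, ← pow_mul, mul_comm]
      · have he : Real.exp (-1) ≤ 1 := by
          calc Real.exp (-1) ≤ Real.exp 0 := Real.exp_le_exp.mpr (by norm_num)
            _ = 1 := Real.exp_zero
        have hfpos : (0 : ℝ) < n.factorial := by exact_mod_cast n.factorial_pos
        gcongr
    · rw [if_neg hmn]
      have hz : (n : ℝ≥0∞) ^ 2 - m = 0 := by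
        refine tsub_eq_zero_of_le ?_
        have h : n ^ 2 ≤ m := le_of_not_gt hmn
        exact_mod_cast Nat.cast_le.mpr h
      rw [hz, ENNReal.zero_rpow_of_pos hp0, zero_mul]
      exact zero_le
  -- total tail sum
  set T : ℝ≥0∞ := ∑' m : ℕ, b m with hT
  have hTle : T ≤ ∑' n : ℕ, (n : ℝ≥0∞) ^ (2 * q + 2) * ENNReal.ofReal (1 / n.factorial) := by
    calc T ≤ ∑' m : ℕ, ∑' n : ℕ,
          (if m < n ^ 2 then (n : ℝ≥0∞) ^ (2 * q) else 0) * ENNReal.ofReal (1 / n.factorial) :=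
          ENNReal.tsum_le_tsum hbb
      _ = ∑' n : ℕ, ∑' m : ℕ,
          (if m < n ^ 2 then (n : ℝ≥0∞) ^ (2 * q) else 0) * ENNReal.ofReal (1 / n.factorial) :=
          ENNReal.tsum_comm
      _ = ∑' n : ℕ, (n : ℝ≥0∞) ^ (2 * q + 2) * ENNReal.ofReal (1 / n.factorial) := by
          refine tsum_congr fun n => ?_
          rw [ENNReal.tsum_mul_right]
          congr 1
          have hsum : ∑' m : ℕ, (if m < n ^ 2 then (n : ℝ≥0∞) ^ (2 * q) else 0)
              = ∑ m ∈ Finset.range (n ^ 2), (n : ℝ≥0∞) ^ (2 * q) := by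
            rw [tsum_eq_sum (s := Finset.range (n ^ 2))
              (fun m hm => if_neg (by simpa using hm))]
            exact Finset.sum_congr rfl fun m hm => if_pos (Finset.mem_range.mp hm)
          rw [hsum, Finset.sum_const, Finset.card_range, nsmul_eq_mul]
          push_cast
          ring
  have hTne : T ≠ ⊤ := ne_top_of_le_ne_top (tsum_pow_div_factorial_ne_top (2 * q + 2)) hTle
  -- sum over ℤ of shifted b
  have hZ : ∀ k : ℤ, ∑' ℓ : ℤ, b (k - ℓ).natAbs ≤ 2 * T := by
    intro k
    have h1 : ∑' ℓ : ℤ, b (k - ℓ).natAbs = ∑' j : ℤ, b j.natAbs := by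
      rw [← (Equiv.subLeft k).tsum_eq fun j : ℤ => b j.natAbs]
      exact tsum_congr fun j => by simp
    rw [h1, tsum_of_nat_of_neg_add_one ENNReal.summable ENNReal.summable, two_mul]
    have h2 : ∑' n : ℕ, b ((n : ℤ)).natAbs = T := by
      exact tsum_congr fun n => by simp
    have h3 : ∑' n : ℕ, b ((-(↑n + 1) : ℤ)).natAbs = ∑' n : ℕ, b (n + 1) := by
      refine tsum_congr fun n => ?_
      congr 1
    have h4 : ∑' n : ℕ, b (n + 1) ≤ T :=
      Summable.tsum_le_tsum_of_inj (fun n : ℕ => n + 1) (fun a b h => by simpa using h)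
        (fun c _ => zero_le) (fun n => le_rfl) ENNReal.summable ENNReal.summable
    rw [h2, h3]
    exact add_le_add le_rfl h4
  -- assemble
  have h2p_ne : (2 : ℝ≥0∞) ^ p ≠ ⊤ := by
    exact ENNReal.rpow_ne_top_of_nonneg hp0.le (by norm_num)
  have h4p_ne : (4 : ℝ≥0∞) ^ p ≠ ⊤ := by
    exact ENNReal.rpow_ne_top_of_nonneg hp0.le (by norm_num)
  refine ⟨2 ^ p * (4 ^ p + 2 * T), ?_, ?_⟩
  · exact ENNReal.mul_ne_top h2p_ne
      (ENNReal.add_ne_top.mpr ⟨h4p_ne, ENNReal.mul_ne_top (by norm_num) hTne⟩)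
  intro k
  have hterm_meas : ∀ ℓ : ℤ,
      Measurable fun ω => ((μ ω (unitIv ℓ)) ^ 2 - ((k - ℓ).natAbs : ℝ≥0∞)) ^ p := fun ℓ =>
    ENNReal.continuous_rpow_const.measurable.comp
      (((hmeas ℓ).pow_const 2).sub measurable_const)
  have hpoint : ∀ ω, Nsq (μ ω) k ^ p ≤
      2 ^ p * (4 ^ p + ∑' ℓ : ℤ, ((μ ω (unitIv ℓ)) ^ 2 - ((k - ℓ).natAbs : ℝ≥0∞)) ^ p) := by
    intro ω
    refine le_trans (ennreal_add_rpow_le _ _ hp0.le) ?_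
    gcongr
    rw [ennreal_iSup_rpow _ hp0]
    exact iSup_le fun ℓ => ENNReal.le_tsum ℓ
  calc ∫⁻ ω, Nsq (μ ω) k ^ p ∂P
      ≤ ∫⁻ ω, 2 ^ p * (4 ^ p
          + ∑' ℓ : ℤ, ((μ ω (unitIv ℓ)) ^ 2 - ((k - ℓ).natAbs : ℝ≥0∞)) ^ p) ∂P :=
        lintegral_mono hpoint
    _ = 2 ^ p * (4 ^ p + ∑' ℓ : ℤ,
          ∫⁻ ω, ((μ ω (unitIv ℓ)) ^ 2 - ((k - ℓ).natAbs : ℝ≥0∞)) ^ p ∂P) := by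
        rw [lintegral_const_mul' _ _ h2p_ne, lintegral_add_left measurable_const,
          lintegral_const, measure_univ, mul_one,
          lintegral_tsum fun ℓ => (hterm_meas ℓ).aemeasurable]
    _ = 2 ^ p * (4 ^ p + ∑' ℓ : ℤ, b (k - ℓ).natAbs) := by
        rw [tsum_congr fun ℓ => hBint ℓ (k - ℓ).natAbs]
    _ ≤ 2 ^ p * (4 ^ p + 2 * T) := by
        gcongr
        exact hZ k

end AuxPoisson

open ProbabilityTheory
/-- Moment bound for the weighted norm under the Poisson process:
`𝔼[‖f‖_{L²_μ}^{2p}] ≲_p ‖f‖_{L²}^{2p}`; in particular `f ∈ L²_μ` almost surely. -/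
theorem poisson_L2mu_moment {Ω : Type*} [MeasurableSpace Ω]
    (P : Measure Ω) [IsProbabilityMeasure P] (μ : Ω → Measure ℝ)
    (hmeas : ∀ ℓ : ℤ, Measurable fun ω => μ ω (unitIv ℓ))
    (hnat : ∀ ω ℓ, ∃ n : ℕ, μ ω (unitIv ℓ) = n)
    (hdist : ∀ (ℓ : ℤ) (n : ℕ),
      P {ω | μ ω (unitIv ℓ) = n} = ENNReal.ofReal (Real.exp (-1) / n.factorial))
    (hindep : iIndepFun
      (fun ℓ ω => μ ω (unitIv ℓ)) P) :
    ∀ p : ℝ, 1 ≤ p → ∃ C > 0, ∀ f : ℝ → ℂ, MemLp f 2 (volume : Measure ℝ) →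
      (∫⁻ ω, (∫⁻ x, (‖f x‖₊ : ℝ≥0∞) ^ 2 * weightE (μ ω) x) ^ p ∂P) ≤
        ENNReal.ofReal C * eLpNorm f 2 (volume : Measure ℝ) ^ (2 * p) ∧
      ∀ᵐ ω ∂P, MemL2mu (μ ω) f := by
  intro p hp
  have hp0 : 0 < p := lt_of_lt_of_le zero_lt_one hp
  obtain ⟨M, hMne, hM⟩ := moment_bound P μ hmeas hnat hdist hp
  have h2p_ne : (2 : ℝ≥0∞) ^ p ≠ ⊤ := ENNReal.rpow_ne_top_of_nonneg hp0.le (by norm_num)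
  set K : ℝ≥0∞ := 2 ^ p * (2 * M) with hK
  have hKne : K ≠ ⊤ := ENNReal.mul_ne_top h2p_ne (ENNReal.mul_ne_top (by norm_num) hMne)
  refine ⟨K.toReal + 1, by positivity, ?_⟩
  intro f hf
  have hKC : K ≤ ENNReal.ofReal (K.toReal + 1) := by
    calc K = ENNReal.ofReal K.toReal := (ENNReal.ofReal_toReal hKne).symm
      _ ≤ _ := ENNReal.ofReal_le_ofReal (by linarith)
  set F : ℝ → ℝ≥0∞ := fun x => (‖f x‖₊ : ℝ≥0∞) ^ 2 with hF
  have hFmeas : AEMeasurable F volume := hf.aestronglyMeasurable.enorm.pow_const 2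
  set I : ℝ≥0∞ := ∫⁻ x, F x with hI
  have hIeq : eLpNorm f 2 volume = I ^ (1 / 2 : ℝ) := by
    rw [eLpNorm_eq_lintegral_rpow_enorm_toReal (by norm_num) (by norm_num)]
    have heq : ∀ x : ℝ, ‖f x‖ₑ ^ (2 : ℝ≥0∞).toReal = F x := by
      intro x
      show (‖f x‖₊ : ℝ≥0∞) ^ (2 : ℝ≥0∞).toReal = (‖f x‖₊ : ℝ≥0∞) ^ (2 : ℕ)
      rw [ENNReal.toReal_ofNat, ← ENNReal.rpow_natCast]
      norm_num
    simp_rw [heq]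
    rw [ENNReal.toReal_ofNat, ← hI]
  have hIJ : I = eLpNorm f 2 volume ^ (2 : ℝ) := by
    rw [hIeq, ← ENNReal.rpow_mul]
    norm_num
  have hIne : I ≠ ⊤ := by
    rw [hIJ]
    exact (ENNReal.rpow_lt_top_of_nonneg (by norm_num) hf.2.ne).ne
  have hIp : I ^ p = eLpNorm f 2 volume ^ (2 * p) := by
    rw [hIJ, ← ENNReal.rpow_mul]
  set c : ℤ → ℝ≥0∞ := fun k => ∫⁻ x in Set.Ico (k : ℝ) ((k : ℝ) + 1), F x with hc
  have hcI : ∑' k : ℤ, c k = I := (lintegral_eq_tsum_Ico F).symm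
  have hcne : ∀ k, c k ≠ ⊤ := fun k =>
    ne_top_of_le_ne_top hIne (setLIntegral_le_lintegral _ _)
  set S : ℤ → Ω → ℝ≥0∞ := fun k ω => Nsq (μ ω) k with hS
  have hSmeas : ∀ k, Measurable (S k) := by
    intro k
    refine measurable_const.add (Measurable.iSup (α := ℝ≥0∞) fun ℓ : ℤ => ?_)
    exact ((hmeas ℓ).pow_const 2).sub measurable_const
  set g : ℤ → Ω → ℝ≥0∞ := fun k ω => c k * (S k ω + S (k + 1) ω) with hg
  have hgmeas : ∀ k, Measurable (g k) := fun k =>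
    measurable_const.mul ((hSmeas k).add (hSmeas (k + 1)))
  -- pointwise bound
  have hX : ∀ ω, (∫⁻ x, F x * weightE (μ ω) x) ≤ ∑' k, g k ω := by
    intro ω
    rw [lintegral_eq_tsum_Ico]
    refine ENNReal.tsum_le_tsum fun k => ?_
    have hw : ∀ x ∈ Set.Ico ((k : ℝ)) ((k : ℝ) + 1),
        weightE (μ ω) x ≤ S k ω + S (k + 1) ω := by
      intro x hx
      have hfl : ⌊x⌋ = k := by
        rw [Int.floor_eq_iff]; exact ⟨hx.1, by exact_mod_cast hx.2⟩
      have hx1 : (k : ℝ) ≤ x := hx.1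
      have hx2 : x < (k : ℝ) + 1 := hx.2
      rw [weightE, hfl]
      refine add_le_add ?_ ?_
      · calc ENNReal.ofReal (1 + (k : ℝ) - x) * Nsq (μ ω) k
            ≤ 1 * Nsq (μ ω) k := by
              gcongr
              exact ENNReal.ofReal_le_one.mpr (by linarith)
          _ = S k ω := one_mul _
      · calc ENNReal.ofReal (x - (k : ℝ)) * Nsq (μ ω) (k + 1)
            ≤ 1 * Nsq (μ ω) (k + 1) := by
              gcongr
              exact ENNReal.ofReal_le_one.mpr (by linarith)
          _ = S (k + 1) ω := one_mul _
    calc ∫⁻ x in Set.Ico ((k : ℝ)) ((k : ℝ) + 1), F x * weightE (μ ω) x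
        ≤ ∫⁻ x in Set.Ico ((k : ℝ)) ((k : ℝ) + 1), F x * (S k ω + S (k + 1) ω) :=
          setLIntegral_mono' measurableSet_Ico fun x hx => mul_le_mul_right (hw x hx) _
      _ = c k * (S k ω + S (k + 1) ω) :=
          lintegral_mul_const'' _ hFmeas.restrict
      _ = g k ω := rfl
  -- moment bound per k
  have hgk : ∀ k, ∫⁻ ω, g k ω ^ p ∂P ≤ c k ^ p * K := by
    intro k
    have hSp : ∀ k', Measurable fun ω => S k' ω ^ p := fun k' =>
      ENNReal.continuous_rpow_const.measurable.comp (hSmeas k')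
    calc ∫⁻ ω, g k ω ^ p ∂P
        = ∫⁻ ω, c k ^ p * (S k ω + S (k + 1) ω) ^ p ∂P := by
          simp_rw [hg, ENNReal.mul_rpow_of_nonneg _ _ hp0.le]
      _ = c k ^ p * ∫⁻ ω, (S k ω + S (k + 1) ω) ^ p ∂P :=
          lintegral_const_mul' _ _ (ENNReal.rpow_ne_top_of_nonneg hp0.le (hcne k))
      _ ≤ c k ^ p * K := by
          gcongr
          calc ∫⁻ ω, (S k ω + S (k + 1) ω) ^ p ∂P
              ≤ ∫⁻ ω, 2 ^ p * (S k ω ^ p + S (k + 1) ω ^ p) ∂P :=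
                lintegral_mono fun ω => ennreal_add_rpow_le _ _ hp0.le
            _ = 2 ^ p * ((∫⁻ ω, S k ω ^ p ∂P) + ∫⁻ ω, S (k + 1) ω ^ p ∂P) := by
                rw [lintegral_const_mul' _ _ h2p_ne, lintegral_add_left (hSp k)]
            _ ≤ 2 ^ p * (M + M) := by
                gcongr
                · exact hM k
                · exact hM (k + 1)
            _ = K := by rw [hK, two_mul]
  -- main chain
  have hchain : ∫⁻ ω, (∑' k, g k ω) ^ p ∂P ≤ I ^ p * K := by
    calc ∫⁻ ω, (∑' k, g k ω) ^ p ∂P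
        ≤ (∑' k, (∫⁻ ω, g k ω ^ p ∂P) ^ (1 / p)) ^ p :=
          lintegral_tsum_rpow_le P g hgmeas hp
      _ ≤ (∑' k, (c k ^ p * K) ^ (1 / p)) ^ p := by
          gcongr with k
          exact hgk k
      _ = (∑' k, c k * K ^ (1 / p)) ^ p := by
          congr 1
          refine tsum_congr fun k => ?_
          rw [ENNReal.mul_rpow_of_nonneg _ _ (by positivity), ← ENNReal.rpow_mul,
            mul_one_div_cancel hp0.ne', ENNReal.rpow_one]
      _ = (I * K ^ (1 / p)) ^ p := by rw [ENNReal.tsum_mul_right, hcI]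
      _ = I ^ p * K := by
          rw [ENNReal.mul_rpow_of_nonneg _ _ hp0.le, ← ENNReal.rpow_mul,
            one_div_mul_cancel hp0.ne', ENNReal.rpow_one]
  constructor
  · calc ∫⁻ ω, (∫⁻ x, (‖f x‖₊ : ℝ≥0∞) ^ 2 * weightE (μ ω) x) ^ p ∂P
        ≤ ∫⁻ ω, (∑' k, g k ω) ^ p ∂P :=
          lintegral_mono fun ω => ENNReal.rpow_le_rpow (hX ω) hp0.le
      _ ≤ I ^ p * K := hchain
      _ ≤ ENNReal.ofReal (K.toReal + 1) * eLpNorm f 2 volume ^ (2 * p) := by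
          rw [hIp, mul_comm]
          exact mul_le_mul_left hKC _
  · have hYmeas : Measurable fun ω => (∑' k, g k ω) ^ p :=
      ENNReal.continuous_rpow_const.measurable.comp (Measurable.ennreal_tsum hgmeas)
    have hne : (∫⁻ ω, (∑' k, g k ω) ^ p ∂P) ≠ ⊤ := by
      refine ne_top_of_le_ne_top ?_ hchain
      exact ENNReal.mul_ne_top (ENNReal.rpow_ne_top_of_nonneg hp0.le hIne) hKne
    filter_upwards [ae_lt_top hYmeas hne] with ω hω
    have hY : (∑' k, g k ω) < ⊤ := (ENNReal.rpow_lt_top_iff_of_pos hp0).mp hω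
    exact (lt_of_le_of_lt (hX ω) hY).ne
end
end
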